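/- arXiv:2210.08257 — 5 statements merged into one kernel-verified Lean document; each statement's English description precedes it below -/
import Mathlib

section
/- Let (g, φ) be a quadratic Lie algebra over a field K of characteristic zero and let I be a minimal nonzero ideal of g such that the restriction of φ to I is nondegenerate. Then I is a simple Lie algebra or I is one-dimensional. -/
/-- The orthogonal complement `{x ∈ L : φ(x,u) = 0 for all u ∈ U}` of a subspace `U`
relative to a bilinear form `φ`. -/
def perp {K L : Type*} [Field K] [AddCommGroup L] [Module K L]
    (φ : L →ₗ[K] L →ₗ[K] K) (U : Submodule K L) : Submodule K L where
  carrier := {x | ∀ u ∈ U, φ x u = 0}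
  add_mem' := by
    intro a b ha hb u hu
    simp [map_add, ha u hu, hb u hu]
  zero_mem' := by
    intro u hu
    simp
  smul_mem' := by
    intro c a ha u hu
    simp [map_smul, ha u hu]

/-!
An invariant form makes `I^⊥` an ideal, and nondegeneracy on `I` makes it a complement of `I`.
Then `⁅I^⊥, I⁆ ⊆ I ∩ I^⊥ = 0`, so every ideal of the Lie algebra `I` is already an ideal of `g`,
and minimality of `I` says that `I` has no ideals besides `0` and `I`. If `I` is not abelian it
is therefore simple; if it is abelian, every subspace of `I` is an ideal, so `dim I = 1`.
-/

lemma perp_eq_orthogonal {K L : Type*} [Field K] [AddCommGroup L] [Module K L]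
    {φ : L →ₗ[K] L →ₗ[K] K} (hsymm : ∀ x y : L, φ x y = φ y x) (U : Submodule K L) :
    perp φ U = LinearMap.BilinForm.orthogonal φ U := by
  ext x
  exact forall₂_congr fun u _ => by rw [hsymm]

namespace LieIdeal

variable {R L : Type*} [CommRing R] [LieRing L] [LieAlgebra R L] {I C : LieIdeal R L}

lemma lie_eq_zero_of_isCompl (h : IsCompl I C) {x y : L} (hx : x ∈ C) (hy : y ∈ I) :
    ⁅x, y⁆ = 0 := by
  rw [← LieSubmodule.mem_bot (R := R) (L := L), ← h.inf_eq_bot]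
  exact ⟨lie_mem_right R L I x y hy, lie_mem_left R L C x y hx⟩

def mapOfIsCompl (h : IsCompl I C) (J : LieIdeal R I) : LieIdeal R L where
  toSubmodule := J.toSubmodule.map I.incl.toLinearMap
  lie_mem := by
    rintro x _ ⟨y, hy, rfl⟩
    obtain ⟨a, ha, c, hc, rfl⟩ :=
      (LieSubmodule.mem_sup _ _ _).mp (h.sup_eq_top ▸ LieSubmodule.mem_top x)
    change ⁅a + c, (y : L)⁆ ∈ J.toSubmodule.map I.incl.toLinearMap
    rw [add_lie, lie_eq_zero_of_isCompl h hc y.2, add_zero]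
    exact ⟨⁅⟨a, ha⟩, y⁆, J.lie_mem hy, rfl⟩

lemma coe_mem_mapOfIsCompl_iff (h : IsCompl I C) (J : LieIdeal R I) (y : I) :
    (y : L) ∈ mapOfIsCompl h J ↔ y ∈ J :=
  ⟨fun ⟨_, hz, hzy⟩ => Subtype.ext hzy ▸ hz, fun hy => ⟨y, hy, rfl⟩⟩

lemma isSimpleOrder_of_isAtom_of_isCompl (hI : IsAtom I) (h : IsCompl I C) :
    IsSimpleOrder (LieIdeal R I) := by
  have : Nontrivial I := (LieSubmodule.nontrivial_iff_ne_bot R L L).mpr hI.1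
  refine ⟨fun J => ?_⟩
  have hJI : mapOfIsCompl h J ≤ I := by
    rintro _ ⟨y, -, rfl⟩
    exact y.2
  refine (hI.le_iff.mp hJI).imp (fun hbot => ?_) (fun htop => ?_)
  · refine (LieSubmodule.eq_bot_iff J).mpr fun y hy => ?_
    simpa [hbot] using (coe_mem_mapOfIsCompl_iff h J y).mpr hy
  · refine eq_top_iff.mpr fun y _ => (coe_mem_mapOfIsCompl_iff h J y).mp ?_
    rw [htop]
    exact y.2

end LieIdeal

lemma LieModule.isSimpleModule_of_isIrreducible_of_isTrivial {R L M : Type*} [CommRing R]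
    [LieRing L] [AddCommGroup M] [Module R M] [LieRingModule L M] [LieModule.IsTrivial L M]
    [LieModule.IsIrreducible R L M] : IsSimpleModule R M := by
  have : Nontrivial M := (LieSubmodule.nontrivial_iff R L M).mp inferInstance
  suffices IsSimpleOrder (Submodule R M) from ⟨⟩
  refine ⟨fun S => ?_⟩
  let N : LieSubmodule R L M :=
    { S with lie_mem := fun {x m} _ => by rw [trivial_lie_zero]; exact S.zero_mem }
  exact (IsSimpleOrder.eq_bot_or_eq_top N).imp (congrArg LieSubmodule.toSubmodule)
    (congrArg LieSubmodule.toSubmodule)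

theorem minimal_nondegenerate_ideal_simple_or_one_dimensional_general
    {K : Type*} [Field K]
    {L : Type*} [LieRing L] [LieAlgebra K L] [FiniteDimensional K L]
    (φ : L →ₗ[K] L →ₗ[K] K)
    (hsymm : ∀ x y : L, φ x y = φ y x)
    (hinv : ∀ x y z : L, φ ⁅x, y⁆ z = φ x ⁅y, z⁆)
    (I : LieIdeal K L)
    (hne : I ≠ ⊥)
    (hmin : ∀ J : LieIdeal K L, J ≤ I → J = ⊥ ∨ J = I)
    (hnd : LieSubmodule.toSubmodule I ⊓ perp φ (LieSubmodule.toSubmodule I) = ⊥) :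
    LieAlgebra.IsSimple K I ∨ Module.finrank K I = 1 := by
  have hφ : LinearMap.BilinForm.lieInvariant L φ := fun x y z => by
    rw [← lie_skew, map_neg, LinearMap.neg_apply, hinv]
  have hcompl : IsCompl I (LieAlgebra.InvariantForm.orthogonal φ hφ I) := by
    rw [← LieSubmodule.isCompl_toSubmodule, LieAlgebra.InvariantForm.orthogonal_toSubmodule,
      LinearMap.BilinForm.isCompl_orthogonal_iff_disjoint fun x y h => (hsymm y x).trans h,
      disjoint_iff, ← perp_eq_orthogonal hsymm]
    exact hnd
  have hatom : IsAtom I := ⟨hne, fun J hJ => (hmin J hJ.le).resolve_right hJ.ne⟩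
  have hsimple := LieIdeal.isSimpleOrder_of_isAtom_of_isCompl hatom hcompl
  by_cases hab : IsLieAbelian I
  · exact .inr (isSimpleModule_iff_finrank_eq_one.mp
      (LieModule.isSimpleModule_of_isIrreducible_of_isTrivial (L := I)))
  · exact .inl ((LieAlgebra.isSimple_iff_of_not_isLieAbelian K I hab).mp hsimple)

/-- In a quadratic Lie algebra, any minimal nonzero ideal on which the form restricts
nondegenerately is a simple Lie algebra or is one-dimensional. -/
theorem minimal_nondegenerate_ideal_simple_or_one_dimensional
    {K : Type*} [Field K] [CharZero K]
    {L : Type*} [LieRing L] [LieAlgebra K L] [FiniteDimensional K L]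
    (φ : L →ₗ[K] L →ₗ[K] K)
    (hsymm : ∀ x y : L, φ x y = φ y x)
    (hnondeg : ∀ x : L, (∀ y : L, φ x y = 0) → x = 0)
    (hinv : ∀ x y z : L, φ ⁅x, y⁆ z = φ x ⁅y, z⁆)
    (I : LieIdeal K L)
    (hne : I ≠ ⊥)
    (hmin : ∀ J : LieIdeal K L, J ≤ I → J = ⊥ ∨ J = I)
    (hnd : LieSubmodule.toSubmodule I ⊓ perp φ (LieSubmodule.toSubmodule I) = ⊥) :
    LieAlgebra.IsSimple K I ∨ Module.finrank K I = 1 :=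
  minimal_nondegenerate_ideal_simple_or_one_dimensional_general φ hsymm hinv I hne hmin hnd
end

section
/- Let (g, φ) be a quadratic Lie algebra over a field K of characteristic zero and let I be a minimal nonzero ideal of g such that the restriction of φ to I is degenerate (I ∩ I^⊥ ≠ 0). Then I is totally isotropic (I ⊆ I^⊥, i.e. φ(I,I) = 0) and I is abelian ([I,I] = 0). -/
/-- In a quadratic Lie algebra, any minimal nonzero ideal on which the form restricts
degenerately is totally isotropic and abelian. -/
theorem minimal_degenerate_ideal_isotropic_abelian
    {K : Type*} [Field K] [CharZero K]
    {L : Type*} [LieRing L] [LieAlgebra K L] [FiniteDimensional K L]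
    (φ : L →ₗ[K] L →ₗ[K] K)
    (hsymm : ∀ x y : L, φ x y = φ y x)
    (hnondeg : ∀ x : L, (∀ y : L, φ x y = 0) → x = 0)
    (hinv : ∀ x y z : L, φ ⁅x, y⁆ z = φ x ⁅y, z⁆)
    (I : LieIdeal K L)
    (hne : I ≠ ⊥)
    (hmin : ∀ J : LieIdeal K L, J ≤ I → J = ⊥ ∨ J = I)
    (hdeg : LieSubmodule.toSubmodule I ⊓ perp φ (LieSubmodule.toSubmodule I) ≠ ⊥) :
    LieSubmodule.toSubmodule I ≤ perp φ (LieSubmodule.toSubmodule I)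
      ∧ (∀ x ∈ I, ∀ y ∈ I, φ x y = 0)
      ∧ ∀ x ∈ I, ∀ y ∈ I, ⁅x, y⁆ = (0 : L) := by
  -- J = I ∩ I^⊥ as a Lie ideal
  set S : Submodule K L := LieSubmodule.toSubmodule I ⊓ perp φ (LieSubmodule.toSubmodule I)
    with hS
  have hSlie : ∀ (z m : L), m ∈ S → ⁅z, m⁆ ∈ S := by
    intro z m hm
    obtain ⟨hmI, hmP⟩ := hm
    refine ⟨I.lie_mem hmI, ?_⟩
    intro u hu
    have h1 : φ ⁅z, m⁆ u = - φ ⁅m, z⁆ u := by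
      rw [← lie_skew z m, map_neg, LinearMap.neg_apply]
    rw [h1, hinv m z u]
    have : (⁅z, u⁆ : L) ∈ LieSubmodule.toSubmodule I := I.lie_mem hu
    rw [hmP _ this, neg_zero]
  let J : LieIdeal K L :=
    { S with lie_mem := fun {z m} hm => hSlie z m hm }
  have hJS : LieSubmodule.toSubmodule J = S := rfl
  have hJI : J ≤ I := by
    intro x hx
    exact (hx : x ∈ S).1
  have hJne : J ≠ ⊥ := by
    intro h
    apply hdeg
    rw [← hJS, h]
    rfl
  have hJeq : J = I := (hmin J hJI).resolve_left hJne
  have hle : LieSubmodule.toSubmodule I ≤ perp φ (LieSubmodule.toSubmodule I) := by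
    intro x hx
    have : x ∈ J := hJeq ▸ hx
    exact (this : x ∈ S).2
  refine ⟨hle, ?_, ?_⟩
  · intro x hx y hy
    exact hle hx y hy
  · intro x hx y hy
    apply hnondeg
    intro z
    rw [hinv x y z]
    have h2 : (⁅z, y⁆ : L) ∈ I := I.lie_mem hy
    have h3 : (⁅y, z⁆ : L) ∈ LieSubmodule.toSubmodule I := by
      rw [← lie_skew]; exact neg_mem h2
    exact hle hx _ h3
end

section
/- Let (g, φ) be a quadratic Lie algebra over a field K of characteristic zero. Then there exist ideals R and A of g with g = R ⊕ A, φ(R, A) = 0, the restrictions of φ to R and to A nondegenerate, A abelian, and R reduced (i.e. Z(R) ⊆ [R,R]). -/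
/-! Invariance and nondegeneracy of `φ` give `Z(g) = [g,g]ᗮ`. Let `A` be a complement, inside
`Z(g)`, of the radical `Z(g) ∩ [g,g]` of `φ` on `Z(g)`, and let `R = Aᗮ`. Then `A` is a central,
hence abelian, ideal on which `φ` is nondegenerate, so `g = R ⊕ A` orthogonally and `R` is an
ideal. As `A` is central, `[R,R] = [g,g]` and `Z(R) ⊆ Z(g) ∩ R`, which by the modular law is
`(Z(g) ∩ [g,g]) + (A ∩ R) = Z(g) ∩ [g,g] ⊆ [R,R]`. -/

open LieAlgebra LinearMap.BilinForm

section BilinForm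

variable {K V : Type*} [Field K] [AddCommGroup V] [Module K V] {φ : LinearMap.BilinForm K V}

theorem perp_eq_orthogonal_s6 (hφ : φ.IsSymm) (U : Submodule K V) : perp φ U = φ.orthogonal U := by
  ext x
  exact forall₂_congr fun u _ ↦ by rw [hφ.eq]

/-- `W ⊓ φ.orthogonal W` is the radical of `φ` restricted to `W`. -/
theorem disjoint_orthogonal_of_inf_orthogonal_sup_eq (hφ : φ.IsRefl) {W A : Submodule K V}
    (hdisj : Disjoint (W ⊓ φ.orthogonal W) A) (hsup : W ⊓ φ.orthogonal W ⊔ A = W) :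
    Disjoint A (φ.orthogonal A) := by
  rw [Submodule.disjoint_def]
  intro a ha ha'
  have haW : a ∈ W := hsup ▸ Submodule.mem_sup_right ha
  have haW' : a ∈ φ.orthogonal W := by
    intro w hw
    rw [← hsup] at hw
    obtain ⟨r, hr, b, hb, rfl⟩ := Submodule.mem_sup.mp hw
    show φ (r + b) a = 0
    rw [map_add, LinearMap.add_apply, hφ _ _ (hr.2 a haW), ha' b hb, add_zero]
  exact Submodule.disjoint_def.mp hdisj a ⟨haW, haW'⟩ ha

theorem exists_inf_orthogonal_sup_eq_and_disjoint_orthogonal (hφ : φ.IsRefl)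
    (W : Submodule K V) :
    ∃ A, W ⊓ φ.orthogonal W ⊔ A = W ∧ Disjoint A (φ.orthogonal A) := by
  obtain ⟨A, hdisj, hsup⟩ :=
    IsModularLattice.exists_disjoint_and_sup_eq (inf_le_left (b := φ.orthogonal W))
  exact ⟨A, hsup, disjoint_orthogonal_of_inf_orthogonal_sup_eq hφ hdisj hsup⟩

theorem inf_orthogonal_le_orthogonal_of_inf_orthogonal_sup_eq {W A : Submodule K V}
    (hsup : W ⊓ φ.orthogonal W ⊔ A = W) (hA : Disjoint A (φ.orthogonal A)) :
    W ⊓ φ.orthogonal A ≤ φ.orthogonal W :=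
  calc W ⊓ φ.orthogonal A
      = W ⊓ φ.orthogonal W ⊔ A ⊓ φ.orthogonal A := by
        nth_rw 1 [← hsup]
        exact sup_inf_assoc_of_le _ (inf_le_right.trans (orthogonal_le (hsup ▸ le_sup_right)))
    _ ≤ φ.orthogonal W := by
        rw [hA.eq_bot, sup_bot_eq]
        exact inf_le_right

end BilinForm

def LieIdeal.ofLECenter {K L : Type*} [Field K] [LieRing L] [LieAlgebra K L]
    (A : Submodule K L) (hA : A ≤ (center K L).toSubmodule) : LieIdeal K L where
  __ := A
  lie_mem {x m} hm := by
    rw [(LieModule.mem_maxTrivSubmodule K L L m).mp (hA hm) x]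
    exact A.zero_mem

namespace LieAlgebra

variable {K L : Type*} [Field K] [LieRing L] [LieAlgebra K L]

theorem center_eq_orthogonal_derivedSeries {φ : LinearMap.BilinForm K L}
    (hφ : φ.Nondegenerate) (hinv : φ.lieInvariant L) :
    (center K L).toSubmodule = φ.orthogonal (derivedSeries K L 1).toSubmodule := by
  ext x
  rw [derivedSeries_def, derivedSeriesOfIdeal_succ, derivedSeriesOfIdeal_zero,
    LieSubmodule.lieIdeal_oper_eq_linear_span', LieSubmodule.mem_toSubmodule,
    LieModule.mem_maxTrivSubmodule]
  change _ ↔ Submodule.span K _ ≤ LinearMap.ker (φ.flip x)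
  simp only [Submodule.span_le, Set.subset_def, LieSubmodule.mem_top, true_and,
    Set.mem_ofPred_eq, SetLike.mem_coe, LinearMap.mem_ker, forall_exists_index]
  refine ⟨fun h _ y z hyz ↦ ?_, fun h y ↦ hφ.2 _ fun z ↦ ?_⟩
  · subst hyz
    show φ ⁅y, z⁆ x = 0
    rw [hinv, h, map_zero, neg_zero]
  · rw [← neg_eq_zero, ← hinv]
    exact h _ y z rfl

theorem orthogonal_center_eq_derivedSeries [FiniteDimensional K L] {φ : LinearMap.BilinForm K L}
    (hφ : φ.Nondegenerate) (hrefl : φ.IsRefl) (hinv : φ.lieInvariant L) :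
    φ.orthogonal (center K L).toSubmodule = (derivedSeries K L 1).toSubmodule := by
  rw [center_eq_orthogonal_derivedSeries hφ hinv, orthogonal_orthogonal hφ hrefl]

variable {I : LieIdeal K L}

theorem mem_center_of_sup_center_eq_top (hI : I ⊔ center K L = ⊤) {x : I}
    (hx : x ∈ center K I) : (x : L) ∈ center K L := by
  rw [LieModule.mem_maxTrivSubmodule] at hx ⊢
  intro y
  obtain ⟨a, ha, c, hc, rfl⟩ := (LieSubmodule.mem_sup _ _ y).mp (hI ▸ LieSubmodule.mem_top y)
  rw [add_lie, ← lie_skew c, (LieModule.mem_maxTrivSubmodule K L L c).mp hc, neg_zero, add_zero]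
  exact congrArg Subtype.val (hx ⟨a, ha⟩)

theorem lie_self_eq_derivedSeries_of_sup_center_eq_top (hI : I ⊔ center K L = ⊤) :
    ⁅I, I⁆ = derivedSeries K L 1 := by
  rw [derivedSeries_def, derivedSeriesOfIdeal_succ, derivedSeriesOfIdeal_zero, ← hI,
    LieSubmodule.sup_lie, LieSubmodule.lie_sup, LieSubmodule.lie_sup,
    LieSubmodule.lie_comm (center K L) I, LieModule.ideal_oper_maxTrivSubmodule_eq_bot,
    LieModule.ideal_oper_maxTrivSubmodule_eq_bot]
  simp

theorem center_le_derivedSeries_of_sup_center_eq_top (hI : I ⊔ center K L = ⊤)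
    (hZ : center K L ⊓ I ≤ derivedSeries K L 1) :
    center K I ≤ derivedSeries K I 1 := by
  intro x hx
  rw [LieIdeal.derivedSeries_eq_derivedSeriesOfIdeal_comap, LieIdeal.mem_comap,
    derivedSeriesOfIdeal_succ, derivedSeriesOfIdeal_zero,
    lie_self_eq_derivedSeries_of_sup_center_eq_top hI]
  exact hZ ⟨mem_center_of_sup_center_eq_top hI hx, x.2⟩

end LieAlgebra

theorem quadratic_decomposes_reduced_plus_abelian_general
    {K : Type*} [Field K]
    {L : Type*} [LieRing L] [LieAlgebra K L] [FiniteDimensional K L]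
    (φ : L →ₗ[K] L →ₗ[K] K)
    (hsymm : ∀ x y : L, φ x y = φ y x)
    (hnondeg : ∀ x : L, (∀ y : L, φ x y = 0) → x = 0)
    (hinv : ∀ x y z : L, φ ⁅x, y⁆ z = φ x ⁅y, z⁆) :
    ∃ R A : LieIdeal K L,
      -- direct sum of ideals
      LieSubmodule.toSubmodule R ⊔ LieSubmodule.toSubmodule A = ⊤
      ∧ LieSubmodule.toSubmodule R ⊓ LieSubmodule.toSubmodule A = ⊥
      -- orthogonality
      ∧ (∀ x ∈ R, ∀ y ∈ A, φ x y = 0)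
      -- both restrictions of φ are nondegenerate
      ∧ LieSubmodule.toSubmodule R ⊓ perp φ (LieSubmodule.toSubmodule R) = ⊥
      ∧ LieSubmodule.toSubmodule A ⊓ perp φ (LieSubmodule.toSubmodule A) = ⊥
      -- A is abelian
      ∧ (∀ x ∈ A, ∀ y ∈ A, ⁅x, y⁆ = (0 : L))
      -- R is reduced: Z(R) ⊆ [R,R]
      ∧ LieAlgebra.center K R ≤ LieAlgebra.derivedSeries K R 1 := by
  have hφ : LinearMap.BilinForm.IsSymm φ := ⟨hsymm⟩
  have hnd : φ.Nondegenerate :=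
    (LinearMap.IsRefl.nondegenerate_iff_separatingLeft hφ.isRefl).mpr hnondeg
  have hlie : LinearMap.BilinForm.lieInvariant L φ := fun x y z ↦ by
    rw [← lie_skew, map_neg, LinearMap.neg_apply, hinv]
  set Z := (center K L).toSubmodule
  obtain ⟨A₀, hsup, hA₀⟩ := exists_inf_orthogonal_sup_eq_and_disjoint_orthogonal hφ.isRefl Z
  have hA₀Z : A₀ ≤ Z := hsup ▸ le_sup_right
  have hcompl : IsCompl A₀ (orthogonal φ A₀) :=
    (isCompl_orthogonal_iff_disjoint hφ.isRefl).mpr hA₀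
  let A := LieIdeal.ofLECenter A₀ hA₀Z
  let R := LieAlgebra.InvariantForm.orthogonal φ hlie A
  have hR : R ⊔ center K L = ⊤ := by
    rw [← LieSubmodule.toSubmodule_inj, LieSubmodule.sup_toSubmodule,
      LieSubmodule.top_toSubmodule]
    exact eq_top_mono (sup_le_sup_left hA₀Z _) hcompl.symm.sup_eq_top
  have hZR : center K L ⊓ R ≤ derivedSeries K L 1 := by
    rw [← LieSubmodule.toSubmodule_le_toSubmodule, LieSubmodule.inf_toSubmodule,
      ← orthogonal_center_eq_derivedSeries hnd hφ.isRefl hlie]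
    exact inf_orthogonal_le_orthogonal_of_inf_orthogonal_sup_eq hsup hA₀
  refine ⟨R, A, hcompl.symm.sup_eq_top, hcompl.symm.inf_eq_bot,
    fun x hx y hy ↦ hφ.isRefl _ _ (hx y hy), ?_, ?_, fun x hx y _ ↦ ?_,
    center_le_derivedSeries_of_sup_center_eq_top hR hZR⟩
  · rw [perp_eq_orthogonal_s6 hφ, LieAlgebra.InvariantForm.orthogonal_toSubmodule,
      orthogonal_orthogonal hnd hφ.isRefl]
    exact hcompl.symm.inf_eq_bot
  · rw [perp_eq_orthogonal_s6 hφ]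
    exact hA₀.eq_bot
  · rw [← lie_skew, (LieModule.mem_maxTrivSubmodule K L L x).mp (hA₀Z hx) y, neg_zero]

/-- Every quadratic Lie algebra decomposes as an orthogonal direct sum, as ideals, of a
reduced quadratic Lie algebra and an abelian quadratic Lie algebra. -/
theorem quadratic_decomposes_reduced_plus_abelian
    {K : Type*} [Field K] [CharZero K]
    {L : Type*} [LieRing L] [LieAlgebra K L] [FiniteDimensional K L]
    (φ : L →ₗ[K] L →ₗ[K] K)
    (hsymm : ∀ x y : L, φ x y = φ y x)
    (hnondeg : ∀ x : L, (∀ y : L, φ x y = 0) → x = 0)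
    (hinv : ∀ x y z : L, φ ⁅x, y⁆ z = φ x ⁅y, z⁆) :
    ∃ R A : LieIdeal K L,
      -- direct sum of ideals
      LieSubmodule.toSubmodule R ⊔ LieSubmodule.toSubmodule A = ⊤
      ∧ LieSubmodule.toSubmodule R ⊓ LieSubmodule.toSubmodule A = ⊥
      -- orthogonality
      ∧ (∀ x ∈ R, ∀ y ∈ A, φ x y = 0)
      -- both restrictions of φ are nondegenerate
      ∧ LieSubmodule.toSubmodule R ⊓ perp φ (LieSubmodule.toSubmodule R) = ⊥
      ∧ LieSubmodule.toSubmodule A ⊓ perp φ (LieSubmodule.toSubmodule A) = ⊥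
      -- A is abelian
      ∧ (∀ x ∈ A, ∀ y ∈ A, ⁅x, y⁆ = (0 : L))
      -- R is reduced: Z(R) ⊆ [R,R]
      ∧ LieAlgebra.center K R ≤ LieAlgebra.derivedSeries K R 1 :=
  quadratic_decomposes_reduced_plus_abelian_general φ hsymm hnondeg hinv
end

section
/- Let (g, φ) be a quadratic Lie algebra over a field K of characteristic zero. For every t ≥ 0, the term g^{t+1} of the lower central series and the term Z_t(g) of the upper central series are mutual orthogonal complements, (g^{t+1})^⊥ = Z_t(g); in particular dim g = dim g^{t+1} + dim Z_t(g). -/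
section Perp

variable {K L : Type*} [Field K] [AddCommGroup L] [Module K L] (φ : L →ₗ[K] L →ₗ[K] K)

theorem mem_perp_iff_le_ker {U : Submodule K L} {x : L} :
    x ∈ perp φ U ↔ U ≤ LinearMap.ker (φ x) :=
  Iff.rfl

theorem mem_perp_span_iff {S : Set L} {x : L} :
    x ∈ perp φ (Submodule.span K S) ↔ ∀ s ∈ S, φ x s = 0 := by
  rw [mem_perp_iff_le_ker, Submodule.span_le]
  rfl

theorem perp_eq_orthogonal_flip (U : Submodule K L) :
    perp φ U = LinearMap.BilinForm.orthogonal φ.flip U :=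
  rfl

variable {φ}

theorem perp_top_eq_bot (hφ : φ.SeparatingLeft) : perp φ ⊤ = ⊥ :=
  eq_bot_iff.mpr fun x hx => hφ x fun y => hx y trivial

theorem finrank_add_finrank_perp [FiniteDimensional K L] (hφ : φ.SeparatingLeft)
    (U : Submodule K L) :
    Module.finrank K U + Module.finrank K (perp φ U) = Module.finrank K L := by
  have hflip : LinearMap.BilinForm.Nondegenerate φ.flip :=
    (LinearMap.BilinForm.Nondegenerate.ofSeparatingLeft hφ).flip
  rw [perp_eq_orthogonal_flip, LinearMap.BilinForm.finrank_orthogonal hflip]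
  have hU := Submodule.finrank_le U
  omega

end Perp

section Invariant

variable {K L : Type*} [Field K] [LieRing L] [LieAlgebra K L] {φ : L →ₗ[K] L →ₗ[K] K}

theorem mem_perp_lieIdeal_oper_iff (hinv : ∀ x y z : L, φ ⁅x, y⁆ z = φ x ⁅y, z⁆)
    (I J : LieIdeal K L) (x : L) :
    x ∈ perp φ (LieSubmodule.toSubmodule ⁅I, J⁆) ↔
      ∀ y ∈ I, ⁅y, x⁆ ∈ perp φ (LieSubmodule.toSubmodule J) := by
  have hskew (y u : L) : φ ⁅y, x⁆ u = -φ x ⁅y, u⁆ := by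
    rw [← lie_skew, map_neg, LinearMap.neg_apply, hinv]
  rw [LieSubmodule.lieIdeal_oper_eq_linear_span', mem_perp_span_iff]
  constructor
  · intro hx y hy u hu
    rw [hskew, hx _ ⟨y, hy, u, hu, rfl⟩, neg_zero]
  · rintro hx _ ⟨y, hy, u, hu, rfl⟩
    rw [← neg_eq_zero, ← hskew, hx y hy u hu]

theorem perp_lowerCentralSeries_eq_ucs_bot (hφ : φ.SeparatingLeft)
    (hinv : ∀ x y z : L, φ ⁅x, y⁆ z = φ x ⁅y, z⁆) (t : ℕ) :
    perp φ (LieSubmodule.toSubmodule (LieModule.lowerCentralSeries K L L t))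
      = LieSubmodule.toSubmodule (LieSubmodule.ucs t (⊥ : LieIdeal K L)) := by
  induction t with
  | zero => simpa using perp_top_eq_bot hφ
  | succ t ih =>
    ext x
    rw [LieModule.lowerCentralSeries_succ, mem_perp_lieIdeal_oper_iff hinv, LieSubmodule.ucs_succ,
      LieSubmodule.mem_toSubmodule, LieSubmodule.mem_normalizer, ih]
    simp only [LieSubmodule.mem_top, true_implies, LieSubmodule.mem_toSubmodule]

end Invariant

theorem perp_lowerCentralSeries_eq_ucs_general
    {K : Type*} [Field K]
    {L : Type*} [LieRing L] [LieAlgebra K L] [FiniteDimensional K L]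
    (φ : L →ₗ[K] L →ₗ[K] K)
    (hnondeg : ∀ x : L, (∀ y : L, φ x y = 0) → x = 0)
    (hinv : ∀ x y z : L, φ ⁅x, y⁆ z = φ x ⁅y, z⁆) :
    ∀ t : ℕ,
      perp φ (LieSubmodule.toSubmodule (LieModule.lowerCentralSeries K L L t))
          = LieSubmodule.toSubmodule (LieSubmodule.ucs t (⊥ : LieIdeal K L))
      ∧ Module.finrank K L
          = Module.finrank K (LieSubmodule.toSubmodule (LieModule.lowerCentralSeries K L L t))
            + Module.finrank K
                (LieSubmodule.toSubmodule (LieSubmodule.ucs t (⊥ : LieIdeal K L))) := by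
  intro t
  have hperp := perp_lowerCentralSeries_eq_ucs_bot hnondeg hinv t
  refine ⟨hperp, ?_⟩
  rw [← hperp, finrank_add_finrank_perp hnondeg]

/-- In a quadratic Lie algebra, for every `t ≥ 0` the term `g^{t+1}` of the lower central
series (`LieModule.lowerCentralSeries K L L t`, since `g^1 = g` is the `0`-th term) and
the term `Z_t(g)` of the upper central series (`LieSubmodule.ucs t ⊥`) are mutual
orthogonal complements, and in particular
`dim g = dim g^{t+1} + dim Z_t(g)`. -/
theorem perp_lowerCentralSeries_eq_ucs
    {K : Type*} [Field K] [CharZero K]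
    {L : Type*} [LieRing L] [LieAlgebra K L] [FiniteDimensional K L]
    (φ : L →ₗ[K] L →ₗ[K] K)
    (hsymm : ∀ x y : L, φ x y = φ y x)
    (hnondeg : ∀ x : L, (∀ y : L, φ x y = 0) → x = 0)
    (hinv : ∀ x y z : L, φ ⁅x, y⁆ z = φ x ⁅y, z⁆) :
    ∀ t : ℕ,
      perp φ (LieSubmodule.toSubmodule (LieModule.lowerCentralSeries K L L t))
          = LieSubmodule.toSubmodule (LieSubmodule.ucs t (⊥ : LieIdeal K L))
      ∧ Module.finrank K L
          = Module.finrank K (LieSubmodule.toSubmodule (LieModule.lowerCentralSeries K L L t))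
            + Module.finrank K
                (LieSubmodule.toSubmodule (LieSubmodule.ucs t (⊥ : LieIdeal K L))) :=
  perp_lowerCentralSeries_eq_ucs_general φ hnondeg hinv
end

section
/- Let g be a finite-dimensional Lie algebra over a field of characteristic zero such that the derived subalgebra equals the centre and is one-dimensional ([g,g] = Z(g) and dim Z(g) = 1) and dim g ≥ 3 (e.g. the (2n+1)-dimensional Heisenberg algebra h_n for n ≥ 1). Then g admits no symmetric, invariant, nondegenerate bilinear form; i.e. g is not quadratic. -/
/-!
For a nondegenerate invariant form `B`, invariance `B ⁅y, z⁆ x = -B z ⁅y, x⁆` shows that the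
orthogonal complement of the derived algebra `⁅L, L⁆` is exactly the centre, so
`dim ⁅L, L⁆ + dim Z(L) = dim L`. If `⁅L, L⁆ = Z(L)` is a line, this forces `dim L = 2`.
-/

namespace LinearMap.BilinForm

section Ring

variable {R L : Type*} [CommRing R] [LieRing L] [LieAlgebra R L] {B : LinearMap.BilinForm R L}

lemma lieInvariant_of_apply_lie_eq_apply_lie (hB : ∀ x y z : L, B ⁅x, y⁆ z = B x ⁅y, z⁆) :
    B.lieInvariant L := by
  intro x y z
  rw [← lie_skew, map_neg, LinearMap.neg_apply, hB]

lemma orthogonal_derived_eq_center (hB : B.lieInvariant L) (hsep : B.SeparatingRight) :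
    B.orthogonal (⁅(⊤ : LieIdeal R L), ⊤⁆ : LieIdeal R L).toSubmodule =
      (LieAlgebra.center R L).toSubmodule := by
  ext x
  rw [mem_orthogonal_iff, LieSubmodule.mem_toSubmodule, LieModule.mem_maxTrivSubmodule]
  constructor
  · intro hx y
    refine hsep _ fun z ↦ neg_eq_zero.mp ?_
    rw [← hB]
    exact hx _ (LieSubmodule.lie_mem_lie (LieSubmodule.mem_top y) (LieSubmodule.mem_top z))
  · intro hx n hn
    suffices (⁅(⊤ : LieIdeal R L), ⊤⁆ : LieIdeal R L).toSubmodule ≤ (B.flip x).ker from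
      this hn
    rw [LieSubmodule.lieIdeal_oper_eq_linear_span', Submodule.span_le]
    rintro _ ⟨y, -, z, -, rfl⟩
    rw [SetLike.mem_coe, LinearMap.mem_ker, flip_apply, hB, hx, map_zero, neg_zero]

end Ring

lemma finrank_derived_add_finrank_center {K L : Type*} [Field K] [LieRing L] [LieAlgebra K L]
    [FiniteDimensional K L] {B : LinearMap.BilinForm K L} (hB : B.lieInvariant L)
    (hnd : B.Nondegenerate) :
    Module.finrank K (⁅(⊤ : LieIdeal K L), ⊤⁆ : LieIdeal K L).toSubmodule +
      Module.finrank K (LieAlgebra.center K L).toSubmodule = Module.finrank K L := by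
  have h := finrank_orthogonal hnd (⁅(⊤ : LieIdeal K L), ⊤⁆ : LieIdeal K L).toSubmodule
  rw [orthogonal_derived_eq_center hB hnd.2] at h
  have := Submodule.finrank_le (⁅(⊤ : LieIdeal K L), ⊤⁆ : LieIdeal K L).toSubmodule
  omega

end LinearMap.BilinForm

theorem not_quadratic_of_derived_eq_center_one_dimensional_general
    {K : Type*} [Field K]
    {L : Type*} [LieRing L] [LieAlgebra K L] [FiniteDimensional K L]
    (hdc : (⁅(⊤ : LieIdeal K L), (⊤ : LieIdeal K L)⁆ : LieIdeal K L) = LieAlgebra.center K L)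
    (hdim1 : Module.finrank K (LieSubmodule.toSubmodule (LieAlgebra.center K L)) = 1)
    (hdim : 3 ≤ Module.finrank K L) :
    ¬ ∃ φ : L →ₗ[K] L →ₗ[K] K,
        (∀ x y : L, φ x y = φ y x)
        ∧ (∀ x : L, (∀ y : L, φ x y = 0) → x = 0)
        ∧ (∀ x y z : L, φ ⁅x, y⁆ z = φ x ⁅y, z⁆) := by
  rintro ⟨φ, hsymm, hsep, hinv⟩
  have hnd : φ.Nondegenerate :=
    (LinearMap.BilinForm.IsSymm.isRefl ⟨hsymm⟩).nondegenerate_iff_separatingLeft.mpr hsep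
  have h := LinearMap.BilinForm.finrank_derived_add_finrank_center
    (LinearMap.BilinForm.lieInvariant_of_apply_lie_eq_apply_lie hinv) hnd
  rw [hdc, hdim1] at h
  omega

/-- A finite-dimensional Lie algebra (over a field of characteristic zero) whose derived
subalgebra equals its centre and is one-dimensional, and which has dimension at least 3
(e.g. a Heisenberg algebra `h_n`, `n ≥ 1`), admits no symmetric invariant nondegenerate
bilinear form: it is not quadratic. -/
theorem not_quadratic_of_derived_eq_center_one_dimensional
    {K : Type*} [Field K] [CharZero K]
    {L : Type*} [LieRing L] [LieAlgebra K L] [FiniteDimensional K L]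
    (hdc : (⁅(⊤ : LieIdeal K L), (⊤ : LieIdeal K L)⁆ : LieIdeal K L) = LieAlgebra.center K L)
    (hdim1 : Module.finrank K (LieSubmodule.toSubmodule (LieAlgebra.center K L)) = 1)
    (hdim : 3 ≤ Module.finrank K L) :
    ¬ ∃ φ : L →ₗ[K] L →ₗ[K] K,
        (∀ x y : L, φ x y = φ y x)
        ∧ (∀ x : L, (∀ y : L, φ x y = 0) → x = 0)
        ∧ (∀ x y z : L, φ ⁅x, y⁆ z = φ x ⁅y, z⁆) :=
  not_quadratic_of_derived_eq_center_one_dimensional_general hdc hdim1 hdim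
end
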